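/- Let (X,G) be a chain recurrent free semigroup action and k ∈ ℕ. Then for every ε > 0 and every x ∈ X: (1) r_ε(x,G^k) ≥ (1/k)·r_ε(x,G); and (2) there exists ε' ≤ ε such that r_ε(x,G^k) ≤ r_{ε'}(x,G). -/
import Mathlib


open Metric Filter Set
open scoped Classical

noncomputable section

variable {X : Type*} [MetricSpace X] {Y : Type*} [MetricSpace Y] {ι κ : Type*}

/-- `c` satisfies the `(w, δ)`-chain condition along the word `w`. -/
def IsChainSeq (f : ι → X → X) (w : List ι) (δ : ℝ) (c : ℕ → X) : Prop :=
  ∀ (j : ℕ) (h : j < w.length), dist (f (w.get ⟨j, h⟩) (c j)) (c (j + 1)) ≤ δ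

/-- There is a `(w, δ)`-chain from `a` to `b` with `|w| = n`. -/
def ChainFrom (f : ι → X → X) (δ : ℝ) (a b : X) (n : ℕ) : Prop :=
  ∃ w : List ι, w.length = n ∧ ∃ c : ℕ → X, IsChainSeq f w δ c ∧ c 0 = a ∧ c n = b

/-- `x` is a chain recurrent point of the action generated by `f`. -/
def ChainRecurrentPt (f : ι → X → X) (x : X) : Prop :=
  ∀ ε : ℝ, 0 < ε → ∃ n : ℕ, 0 < n ∧ ChainFrom f ε x x n

/-- The action generated by `f` is chain recurrent. -/
def ChainRecurrent (f : ι → X → X) : Prop := ∀ x : X, ChainRecurrentPt f x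

/-- The action generated by `f` is chain transitive. -/
def ChainTransitive (f : ι → X → X) : Prop :=
  ∀ ε : ℝ, 0 < ε → ∀ a b : X, ∃ n : ℕ, 0 < n ∧ ChainFrom f ε a b n

/-- The action generated by `f` is chain mixing. -/
def ChainMixing (f : ι → X → X) : Prop :=
  ∀ ε : ℝ, 0 < ε → ∃ N : ℕ, 0 < N ∧ ∀ a b : X, ∀ n : ℕ, N ≤ n → ChainFrom f ε a b n

/-- The `ε`-chain recurrence time `r_ε(x, G)`. -/
def rTime (f : ι → X → X) (ε : ℝ) (x : X) : ℕ :=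
  sInf {n : ℕ | 0 < n ∧ ChainFrom f ε x x n}

/-- `r_ε(G) = max_x r_ε(x, G)`. -/
def rTimeSup (f : ι → X → X) (ε : ℝ) : ℕ :=
  sSup (Set.range fun x : X => rTime f ε x)

/-- The chain mixing time `m_ε(x, δ, G)`. -/
def mTime (f : ι → X → X) (ε δ : ℝ) (x : X) : ℕ :=
  sInf {N : ℕ | ∀ n : ℕ, N ≤ n → ∀ y : X, ∃ z : X, dist z x < δ ∧ ChainFrom f ε z y n}

/-- `m_ε(δ, G) = max_x m_ε(x, δ, G)`. -/
def mTimeSup (f : ι → X → X) (ε δ : ℝ) : ℕ :=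
  sSup (Set.range fun x : X => mTime f ε δ x)

/-- `f_w = f_{i₀} ∘ f_{i₁} ∘ ⋯ ∘ f_{i_{k-1}}` applied to `x`. -/
def applyWord (f : ι → X → X) (w : List ι) (x : X) : X := w.foldr f x

/-- The generators of `G^k`, indexed by the words of length `k`. -/
def powerGens (f : ι → X → X) (k : ℕ) : (Fin k → ι) → X → X :=
  fun u => applyWord f (List.ofFn u)

/-- The generators `f_j × g_k` of the product action `G × H`. -/
def prodGens (f : ι → X → X) (g : κ → Y → Y) : ι × κ → X × Y → X × Y :=
  fun p z => (f p.1 z.1, g p.2 z.2)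

/-- `T_ε(x)`: the set of lengths of `(w, ε)`-chains from `x` to itself. -/
def Tset (f : ι → X → X) (ε : ℝ) (x : X) : Set ℕ :=
  {n : ℕ | 0 < n ∧ ChainFrom f ε x x n}

/-- `k = gcd T` for a set `T ⊆ ℕ`. -/
def IsGCDOf (T : Set ℕ) (k : ℕ) : Prop :=
  (∀ t ∈ T, k ∣ t) ∧ ∀ d : ℕ, (∀ t ∈ T, d ∣ t) → d ∣ k

/-- `x ∼_ε y`: there is an `(w, ε)`-chain from `x` to `y` whose length is a multiple of `k`. -/
def RelEps (f : ι → X → X) (ε : ℝ) (k : ℕ) (x y : X) : Prop :=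
  ∃ n : ℕ, 0 < n ∧ k ∣ n ∧ ChainFrom f ε x y n

/-- The orbit segment: the first `j` letters of `w` applied, in order, to `x`. -/
def orbitSeg (f : ι → X → X) (w : List ι) (x : X) (j : ℕ) : X :=
  (w.take j).foldl (fun y i => f i y) x

/-- The Bowen-type word metric `d_w`. -/
def wordDist (f : ι → X → X) (w : List ι) (x y : X) : ℝ :=
  ⨆ j : Fin (w.length + 1), dist (orbitSeg f w x (j : ℕ)) (orbitSeg f w y (j : ℕ))

/-- `N(w, ε, G)`: maximal cardinality of a `(w, ε, G)`-separated subset of `X`. -/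
def sepMax (f : ι → X → X) (w : List ι) (ε : ℝ) : ℕ :=
  sSup {k : ℕ | ∃ K : Finset X,
    (∀ x ∈ K, ∀ y ∈ K, x ≠ y → ε ≤ wordDist f w x y) ∧ K.card = k}

/-- Bufetov's topological entropy `h(G)` of a free semigroup action. -/
def topEntropy {m : ℕ} (f : Fin m → X → X) : ℝ :=
  ⨆ ε : {e : ℝ // 0 < e},
    Filter.limsup (fun n : ℕ =>
      Real.log ((∑ w : Fin n → Fin m, (sepMax f (List.ofFn w) ε.1 : ℝ)) / (m : ℝ) ^ n) / (n : ℝ))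
      Filter.atTop

/-- `N*(w, ε, δ, G)`: maximal cardinality of a `(w, ε, δ, G)`-pseudo-separated set. -/
def pseudoSepMax (f : ι → X → X) (w : List ι) (ε δ : ℝ) : ℕ :=
  sSup {k : ℕ | ∃ K : Finset (ℕ → X),
    (∀ c ∈ K, IsChainSeq f w δ c) ∧
    (∀ c ∈ K, ∀ c' ∈ K, c ≠ c' → ∃ j : ℕ, j < w.length ∧ ε < dist (c j) (c' j)) ∧
    K.card = k}

/-- `B*(w, ε, δ, G)`: minimal cardinality of a `(w, ε, δ, G)`-pseudo-spanning set. -/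
def pseudoSpanMin (f : ι → X → X) (w : List ι) (ε δ : ℝ) : ℕ :=
  sInf {k : ℕ | ∃ K : Finset (ℕ → X),
    (∀ c ∈ K, IsChainSeq f w δ c) ∧
    (∀ c : ℕ → X, IsChainSeq f w δ c →
      ∃ c' ∈ K, ∀ j : ℕ, j < w.length → dist (c j) (c' j) ≤ ε) ∧
    K.card = k}

/-- The pseudo-entropy `h*(G)` of a free semigroup action. -/
def pseudoEntropy {m : ℕ} (f : Fin m → X → X) : ℝ :=
  ⨆ ε : {e : ℝ // 0 < e}, ⨅ δ : {d : ℝ // 0 < d},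
    Filter.limsup (fun n : ℕ =>
      Real.log ((∑ w : Fin n → Fin m, (pseudoSepMax f (List.ofFn w) ε.1 δ.1 : ℝ)) / (m : ℝ) ^ n)
        / (n : ℝ)) Filter.atTop

/-- The metric `d'(ω, ω') = m^{-k}`, `k = inf {n | ωₙ ≠ ω'ₙ}`, on `Σ_m^+ = ℕ → Fin m`. -/
def sigmaDist (m : ℕ) (ω ω' : ℕ → Fin m) : ℝ :=
  if h : ∃ n : ℕ, ω n ≠ ω' n then (1 / (m : ℝ)) ^ Nat.find h else 0

/-- The metric `D = max {d', d}` on `Σ_m^+ × X`. -/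
def skewDist (m : ℕ) (p q : (ℕ → Fin m) × X) : ℝ :=
  max (sigmaDist m p.1 q.1) (dist p.2 q.2)

/-- The skew-product transformation `F(ω, x) = (σ ω, f_{ω 0} x)`. -/
def skewMap {m : ℕ} (f : Fin m → X → X) : (ℕ → Fin m) × X → (ℕ → Fin m) × X :=
  fun p => (fun n => p.1 (n + 1), f (p.1 0) p.2)

/-- `c` is a `δ`-pseudo-orbit of length `n + 1` of the single map `F`,
w.r.t. the distance function `D`. -/
def IsPseudoOrbit {Z : Type*} (D : Z → Z → ℝ) (F : Z → Z) (n : ℕ) (δ : ℝ) (c : ℕ → Z) : Prop :=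
  ∀ j : ℕ, j < n → D (F (c j)) (c (j + 1)) ≤ δ

/-- `N*(n, ε, δ, F)` for a single map `F` w.r.t. a distance function `D`. -/
def pseudoSepMaxMap {Z : Type*} (D : Z → Z → ℝ) (F : Z → Z) (n : ℕ) (ε δ : ℝ) : ℕ :=
  sSup {k : ℕ | ∃ K : Finset (ℕ → Z),
    (∀ c ∈ K, IsPseudoOrbit D F n δ c) ∧
    (∀ c ∈ K, ∀ c' ∈ K, c ≠ c' → ∃ j : ℕ, j < n ∧ ε < D (c j) (c' j)) ∧
    K.card = k}

/-- `B*(n, ε, δ, F)` for a single map `F` w.r.t. a distance function `D`. -/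
def pseudoSpanMinMap {Z : Type*} (D : Z → Z → ℝ) (F : Z → Z) (n : ℕ) (ε δ : ℝ) : ℕ :=
  sInf {k : ℕ | ∃ K : Finset (ℕ → Z),
    (∀ c ∈ K, IsPseudoOrbit D F n δ c) ∧
    (∀ c : ℕ → Z, IsPseudoOrbit D F n δ c →
      ∃ c' ∈ K, ∀ j : ℕ, j ≤ n → D (c j) (c' j) ≤ ε) ∧
    K.card = k}

/-- The pseudo-entropy `h*(F)` of a single map `F` w.r.t. a distance function `D`. -/
def pseudoEntropyMap {Z : Type*} (D : Z → Z → ℝ) (F : Z → Z) : ℝ :=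
  ⨆ ε : {e : ℝ // 0 < e}, ⨅ δ : {d : ℝ // 0 < d},
    Filter.limsup (fun n : ℕ =>
      Real.log (pseudoSepMaxMap D F n ε.1 δ.1 : ℝ) / (n : ℝ)) Filter.atTop

/-- An `ε`-chain of length `n` from `a` to `b` for a single map. -/
def ChainFromMap {Z : Type*} (D : Z → Z → ℝ) (F : Z → Z) (δ : ℝ) (a b : Z) (n : ℕ) : Prop :=
  ∃ c : ℕ → Z, IsPseudoOrbit D F n δ c ∧ c 0 = a ∧ c n = b

/-- `r_ε(z, F)` for a single map. -/
def rTimeMap {Z : Type*} (D : Z → Z → ℝ) (F : Z → Z) (ε : ℝ) (z : Z) : ℕ :=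
  sInf {n : ℕ | 0 < n ∧ ChainFromMap D F ε z z n}

/-- `r_ε(F)` for a single map. -/
def rTimeMapSup {Z : Type*} (D : Z → Z → ℝ) (F : Z → Z) (ε : ℝ) : ℕ :=
  sSup (Set.range fun z : Z => rTimeMap D F ε z)

/-- `m_ε(z, δ, F)` for a single map. -/
def mTimeMap {Z : Type*} (D : Z → Z → ℝ) (F : Z → Z) (ε δ : ℝ) (z : Z) : ℕ :=
  sInf {N : ℕ | ∀ n : ℕ, N ≤ n → ∀ y : Z, ∃ z' : Z, D z' z < δ ∧ ChainFromMap D F ε z' y n}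

/-- `m_ε(δ, F)` for a single map. -/
def mTimeMapSup {Z : Type*} (D : Z → Z → ℝ) (F : Z → Z) (ε δ : ℝ) : ℕ :=
  sSup (Set.range fun z : Z => mTimeMap D F ε δ z)

/-- `N_δ(X)`: the smallest number of sets of diameter at most `δ` that cover `X`. -/
def coverNum (X : Type*) [MetricSpace X] (δ : ℝ) : ℕ :=
  sInf {k : ℕ | ∃ S : Finset (Set X),
    (∀ s ∈ S, Metric.diam s ≤ δ) ∧ (⋃ s ∈ S, s) = Set.univ ∧ S.card = k}

/-- The upper box dimension of `X`. -/
def upperBoxDim (X : Type*) [MetricSpace X] : ℝ :=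
  Filter.limsup (fun δ : ℝ => Real.log (coverNum X δ : ℝ) / (-Real.log δ))
    (nhdsWithin 0 (Set.Ioi 0))

/-- The lower box dimension of `X`. -/
def lowerBoxDim (X : Type*) [MetricSpace X] : ℝ :=
  Filter.liminf (fun δ : ℝ => Real.log (coverNum X δ : ℝ) / (-Real.log δ))
    (nhdsWithin 0 (Set.Ioi 0))

end

section Stmt10Aux

variable {X : Type*} [MetricSpace X] {ι : Type*}

lemma chainFrom_trans' {f : ι → X → X} {δ : ℝ} {a b c : X} {n n' : ℕ}
    (h1 : ChainFrom f δ a b n) (h2 : ChainFrom f δ b c n') :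
    ChainFrom f δ a c (n + n') := by
  obtain ⟨w1, hw1, c1, hc1, hc10, hc1n⟩ := h1
  obtain ⟨w2, hw2, c2, hc2, hc20, hc2n⟩ := h2
  refine ⟨w1 ++ w2, by simp [hw1, hw2], fun j => if j < n then c1 j else c2 (j - n), ?_, ?_, ?_⟩
  · intro j hj
    have hjlen : j < n + n' := by simpa [hw1, hw2] using hj
    simp only [List.get_eq_getElem]
    by_cases h : j < n
    · have hg : (w1 ++ w2)[j] = w1[j]'(by omega) := List.getElem_append_left (by omega)
      rw [hg]
      simp only [if_pos h]
      have hnext : (if j + 1 < n then c1 (j + 1) else c2 (j + 1 - n)) = c1 (j + 1) := by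
        by_cases h' : j + 1 < n
        · simp [h']
        · have hjn : j + 1 = n := by omega
          simp [h', hjn, hc20, ← hc1n, hw1]
      rw [hnext]
      simpa using hc1 j (by omega)
    · have hg : (w1 ++ w2)[j] = w2[j - w1.length]'(by simp [hw1, hw2]; omega) :=
        List.getElem_append_right (by omega)
      rw [hg]
      simp only [if_neg h, if_neg (by omega : ¬ j + 1 < n), hw1]
      have h1 : j + 1 - n = (j - n) + 1 := by omega
      rw [h1]
      simpa using hc2 (j - n) (by omega)
  · show (if 0 < n then c1 0 else c2 (0 - n)) = a
    by_cases h : 0 < n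
    · rw [if_pos h]; exact hc10
    · rw [if_neg h]
      have hn0 : n = 0 := by omega
      subst hn0
      rw [Nat.zero_sub, hc20, ← hc1n, hc10]
  · show (if n + n' < n then c1 (n + n') else c2 (n + n' - n)) = c
    rw [if_neg (by omega)]
    have h : n + n' - n = n' := by omega
    rw [h, hc2n]

lemma chainFrom_zero' {f : ι → X → X} {δ : ℝ} (a : X) : ChainFrom f δ a a 0 :=
  ⟨[], rfl, fun _ => a, fun j h => by simp at h, rfl, rfl⟩

lemma eq_of_chainFrom_zero {f : ι → X → X} {δ : ℝ} {a b : X}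
    (h : ChainFrom f δ a b 0) : a = b := by
  obtain ⟨w, hw, c, _, h0, hn⟩ := h
  rw [← h0, ← hn]

lemma chainFrom_single' {f : ι → X → X} {δ : ℝ} {a b : X} (i : ι)
    (h : dist (f i a) b ≤ δ) : ChainFrom f δ a b 1 := by
  refine ⟨[i], rfl, fun j => if j = 0 then a else b, ?_, rfl, rfl⟩
  intro j hj
  simp only [List.length_singleton] at hj
  interval_cases j
  simpa using h

lemma chainFrom_orbit {f : ι → X → X} {δ : ℝ} (hδ : 0 ≤ δ) (v : List ι) (a : X) :
    ChainFrom f δ a (applyWord f v a) v.length := by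
  induction v with
  | nil => exact chainFrom_zero' a
  | cons i v' ih =>
      have h1 : ChainFrom f δ (applyWord f v' a) (applyWord f (i :: v') a) 1 :=
        chainFrom_single' i (by simp [applyWord, hδ])
      simpa using chainFrom_trans' ih h1

lemma chainFrom_of_dist {f : ι → X → X} {δ : ℝ} (hδ : 0 ≤ δ) {v : List ι} (hv : v ≠ [])
    {a b : X} (h : dist (applyWord f v a) b ≤ δ) : ChainFrom f δ a b v.length := by
  obtain ⟨i, v', rfl⟩ := List.exists_cons_of_ne_nil hv
  have h1 : ChainFrom f δ (applyWord f v' a) b 1 :=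
    chainFrom_single' i (by simpa [applyWord] using h)
  simpa using chainFrom_trans' (chainFrom_orbit hδ v' a) h1

lemma chainFrom_succ {f : ι → X → X} {δ : ℝ} {a b : X} {n : ℕ}
    (h : ChainFrom f δ a b (n + 1)) :
    ∃ (i : ι) (y : X), dist (f i a) y ≤ δ ∧ ChainFrom f δ y b n := by
  obtain ⟨w, hw, c, hc, h0, hn⟩ := h
  have hwne : w ≠ [] := by rintro rfl; simp at hw
  obtain ⟨i, w', rfl⟩ := List.exists_cons_of_ne_nil hwne
  refine ⟨i, c 1, by simpa [← h0] using hc 0 (by simp), w', by simpa using hw,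
    fun j => c (j + 1), ?_, rfl, hn⟩
  intro j hj
  simpa using hc (j + 1) (by simpa using Nat.succ_lt_succ hj)

lemma chainFrom_split {f : ι → X → X} {δ : ℝ} {a b : X} {n1 n2 : ℕ}
    (h : ChainFrom f δ a b (n1 + n2)) :
    ∃ mid : X, ChainFrom f δ a mid n1 ∧ ChainFrom f δ mid b n2 := by
  obtain ⟨w, hw, c, hc, h0, hn⟩ := h
  refine ⟨c n1, ⟨w.take n1, by simp [hw], c, ?_, h0, rfl⟩,
    ⟨w.drop n1, by simp [hw], fun j => c (n1 + j), ?_, rfl, by rw [← hn]⟩⟩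
  · intro j hj
    have hj' : j < w.length := by simp at hj; omega
    simp only [List.get_eq_getElem, List.getElem_take]
    exact hc j hj'
  · intro j hj
    have hj' : n1 + j < w.length := by simp at hj; omega
    simp only [List.get_eq_getElem, List.getElem_drop]
    have : n1 + j + 1 = n1 + (j + 1) := by omega
    rw [← this]
    exact hc (n1 + j) hj'

lemma chainFrom_repeat {f : ι → X → X} {δ : ℝ} {x : X} {n : ℕ}
    (h : ChainFrom f δ x x n) : ∀ k : ℕ, ChainFrom f δ x x (k * n)
  | 0 => by rw [Nat.zero_mul]; exact chainFrom_zero' x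
  | (k + 1) => by
      have := chainFrom_trans' (chainFrom_repeat h k) h
      simpa [Nat.succ_mul] using this

lemma chainFrom_expand {m k : ℕ} {f : Fin m → X → X} (hk : 0 < k) {ε : ℝ} (hε : 0 ≤ ε) :
    ∀ {n : ℕ} {a b : X}, ChainFrom (powerGens f k) ε a b n → ChainFrom f ε a b (k * n) := by
  intro n
  induction n with
  | zero =>
      intro a b h
      rw [eq_of_chainFrom_zero h, Nat.mul_zero]
      exact chainFrom_zero' b
  | succ n ih =>
      intro a b h
      obtain ⟨u, y, hu, hy⟩ := chainFrom_succ h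
      have h1 : ChainFrom f ε a y k := by
        have hne : List.ofFn u ≠ ([] : List (Fin m)) := by
          intro hnil
          have := congrArg List.length hnil
          simp at this
          omega
        have h2 := chainFrom_of_dist hε hne (a := a) (b := y) hu
        simpa using h2
      have := chainFrom_trans' h1 (ih hy)
      simpa [Nat.mul_succ, Nat.add_comm] using this

lemma unif_modulus {m : ℕ} [CompactSpace X] {f : Fin m → X → X}
    (hf : ∀ i, Continuous (f i)) {ε : ℝ} (hε : 0 < ε) :
    ∃ δ : ℝ, 0 < δ ∧ δ ≤ ε ∧ ∀ (i : Fin m) (x y : X), dist x y ≤ δ → dist (f i x) (f i y) ≤ ε := by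
  have h : ∀ i : Fin m, ∃ δ : ℝ, 0 < δ ∧ ∀ x y : X, dist x y ≤ δ → dist (f i x) (f i y) ≤ ε := by
    intro i
    have huc := CompactSpace.uniformContinuous_of_continuous (hf i)
    rw [Metric.uniformContinuous_iff] at huc
    obtain ⟨δ, hδ, hd⟩ := huc ε hε
    exact ⟨δ / 2, by linarith, fun x y hxy => le_of_lt (hd (lt_of_le_of_lt hxy (by linarith)))⟩
  choose δ hδ hmod using h
  rcases Nat.eq_zero_or_pos m with hm | hm
  · exact ⟨ε, hε, le_refl _, fun i => absurd i.2 (by omega)⟩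
  · have hne : (Finset.univ : Finset (Fin m)).Nonempty := ⟨⟨0, hm⟩, Finset.mem_univ _⟩
    refine ⟨min ε (Finset.univ.inf' hne δ), ?_, min_le_left _ _, ?_⟩
    · exact lt_min hε ((Finset.lt_inf'_iff hne).2 fun i _ => hδ i)
    · intro i x y hxy
      exact hmod i x y (hxy.trans ((min_le_right _ _).trans (Finset.inf'_le _ (Finset.mem_univ i))))

lemma block_key {m : ℕ} [CompactSpace X] {f : Fin m → X → X}
    (hf : ∀ i, Continuous (f i)) {ε : ℝ} (hε : 0 < ε) :
    ∀ k : ℕ, ∃ δ : ℝ, 0 < δ ∧ δ ≤ ε ∧ ∀ (v : List (Fin m)) (c : ℕ → X), v.length ≤ k →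
      IsChainSeq f v δ c → dist (applyWord f v.reverse (c 0)) (c v.length) ≤ ε := by
  intro k
  induction k with
  | zero =>
      refine ⟨ε, hε, le_refl _, ?_⟩
      intro v c hv _
      have : v = [] := List.length_eq_zero_iff.1 (by omega)
      subst this
      simp [applyWord, hε.le]
  | succ k ih =>
      obtain ⟨δk, hδk, hδkε, hblock⟩ := ih
      obtain ⟨θ, hθ, hθle, hmod⟩ := unif_modulus hf (half_pos hδk)
      refine ⟨min θ (δk / 2), lt_min hθ (half_pos hδk),
        (min_le_right _ _).trans (by linarith), ?_⟩
      intro v c hv hc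
      match v with
      | [] => simp [applyWord, hε.le]
      | [i] =>
          have := hc 0 (by simp)
          simp only [List.get_eq_getElem] at this
          have h1 : dist (f i (c 0)) (c 1) ≤ min θ (δk / 2) := by simpa using this
          simpa [applyWord] using h1.trans ((min_le_right _ _).trans (by linarith))
      | i :: j :: v' =>
          set v2 : List (Fin m) := j :: v' with hv2
          -- modified chain
          set c'' : ℕ → X := fun r => if r = 0 then f i (c 0) else c (r + 1) with hc''
          have hstep0 : dist (f i (c 0)) (c 1) ≤ min θ (δk / 2) := by
            have := hc 0 (by simp)
            simpa using this
          have hchain : IsChainSeq f v2 δk c'' := by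
            intro r hr
            rcases Nat.eq_zero_or_pos r with hr0 | hr0
            · subst hr0
              have h1 : dist (f (v2.get ⟨0, hr⟩) (f i (c 0))) (f (v2.get ⟨0, hr⟩) (c 1)) ≤ δk / 2 :=
                hmod _ _ _ (hstep0.trans (min_le_left _ _))
              have h2 : dist (f (v2.get ⟨0, hr⟩) (c 1)) (c 2) ≤ min θ (δk / 2) := by
                have := hc 1 (by simp at hr ⊢; omega)
                simpa [hv2] using this
              have h3 := dist_triangle (f (v2.get ⟨0, hr⟩) (f i (c 0)))
                (f (v2.get ⟨0, hr⟩) (c 1)) (c 2)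
              have : dist (f (v2.get ⟨0, hr⟩) (c'' 0)) (c'' 1) ≤ δk := by
                simp only [hc'']
                simp only [if_pos rfl, if_neg (one_ne_zero)]
                calc dist (f (v2.get ⟨0, hr⟩) (f i (c 0))) (c 2)
                    ≤ _ + _ := h3
                  _ ≤ δk / 2 + δk / 2 := add_le_add h1 (h2.trans (min_le_right _ _))
                  _ = δk := by ring
              simpa using this
            · have hrq : r ≠ 0 := by omega
              have hr1 : r + 1 ≠ 0 := by omega
              simp only [hc'', if_neg hrq, if_neg hr1]
              have hget : (i :: v2).get ⟨r + 1, by simp at hr ⊢; omega⟩ = v2.get ⟨r, hr⟩ := rfl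
              have hle := hc (r + 1) (by simp at hr ⊢; omega)
              rw [hget] at hle
              exact hle.trans ((min_le_right _ _).trans (by linarith))
          have hIH := hblock v2 c'' (by simp at hv ⊢; omega) hchain
          have hc0 : c'' 0 = f i (c 0) := by simp [hc'']
          have hcn : c'' v2.length = c (v2.length + 1) := by
            have hlen : v2.length ≠ 0 := by simp [hv2]
            simp only [hc'', if_neg hlen]
          rw [hc0, hcn] at hIH
          have hrev : applyWord f (i :: v2).reverse (c 0) = applyWord f v2.reverse (f i (c 0)) := by
            simp [applyWord, List.foldr_append]
          rw [List.length_cons]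
          rw [hrev]
          exact hIH

lemma chainFrom_compress {m k : ℕ} [CompactSpace X] {f : Fin m → X → X} (hk : 0 < k)
    {ε δ : ℝ} (hδ : 0 < δ)
    (hblock : ∀ (v : List (Fin m)) (c : ℕ → X), v.length ≤ k →
      IsChainSeq f v δ c → dist (applyWord f v.reverse (c 0)) (c v.length) ≤ ε) :
    ∀ {n : ℕ} {a b : X}, ChainFrom f δ a b (k * n) → ChainFrom (powerGens f k) ε a b n := by
  intro n
  induction n with
  | zero =>
      intro a b h
      rw [Nat.mul_zero] at h
      rw [eq_of_chainFrom_zero h]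
      exact chainFrom_zero' b
  | succ n ih =>
      intro a b h
      have h' : ChainFrom f δ a b (k + k * n) := by
        have : k * (n + 1) = k + k * n := by ring
        rwa [this] at h
      obtain ⟨mid, h1, h2⟩ := chainFrom_split h'
      obtain ⟨v, hvlen, c, hc, hc0, hcn⟩ := h1
      have hdist : dist (applyWord f v.reverse a) mid ≤ ε := by
        have := hblock v c (by omega) hc
        rwa [hc0, hvlen, hcn] at this
      have hrevlen : v.reverse.length = k := by simp [hvlen]
      set u : Fin k → Fin m := fun r => v.reverse[(r : ℕ)]'(by rw [hrevlen]; exact r.2) with hu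
      have hofn : List.ofFn u = v.reverse := by
        apply List.ext_getElem (by simp [hrevlen])
        intro r h1' h2'
        simp [hu]
      have hstep : ChainFrom (powerGens f k) ε a mid 1 :=
        chainFrom_single' u (by rw [powerGens, hofn]; exact hdist)
      have := chainFrom_trans' hstep (ih h2)
      simpa [Nat.add_comm] using this

end Stmt10Aux


theorem stmt10 {X : Type*} [MetricSpace X] [CompactSpace X] {m : ℕ}
    (f : Fin m → X → X) (hf : ∀ i, Continuous (f i)) (hcr : ChainRecurrent f)
    (k : ℕ) (hk : 0 < k) :
    ∀ ε : ℝ, 0 < ε → ∀ x : X,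
      (1 / (k : ℝ)) * (rTime f ε x : ℝ) ≤ (rTime (powerGens f k) ε x : ℝ) ∧
        ∃ ε' : ℝ, 0 < ε' ∧ ε' ≤ ε ∧ rTime (powerGens f k) ε x ≤ rTime f ε' x := by
  intro ε hε x
  obtain ⟨ε', hε'pos, hε'le, hblock⟩ := block_key hf hε k
  have hTne : {n : ℕ | 0 < n ∧ ChainFrom f ε' x x n}.Nonempty := hcr x ε' hε'pos
  have hmem : rTime f ε' x ∈ {n : ℕ | 0 < n ∧ ChainFrom f ε' x x n} := Nat.sInf_mem hTne
  obtain ⟨hn0pos, hn0chain⟩ := hmem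
  have hGk : ChainFrom (powerGens f k) ε x x (rTime f ε' x) :=
    chainFrom_compress hk hε'pos hblock (chainFrom_repeat hn0chain k)
  have hSkne : {n : ℕ | 0 < n ∧ ChainFrom (powerGens f k) ε x x n}.Nonempty :=
    ⟨_, hn0pos, hGk⟩
  have hSkmem : rTime (powerGens f k) ε x ∈
      {n : ℕ | 0 < n ∧ ChainFrom (powerGens f k) ε x x n} := Nat.sInf_mem hSkne
  obtain ⟨hNpos, hNchain⟩ := hSkmem
  refine ⟨?_, ε', hε'pos, hε'le, Nat.sInf_le ⟨hn0pos, hGk⟩⟩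
  have hexp : ChainFrom f ε x x (k * rTime (powerGens f k) ε x) :=
    chainFrom_expand hk hε.le hNchain
  have hle : rTime f ε x ≤ k * rTime (powerGens f k) ε x :=
    Nat.sInf_le ⟨Nat.mul_pos hk hNpos, hexp⟩
  have hkpos : (0 : ℝ) < (k : ℝ) := by exact_mod_cast hk
  rw [one_div, inv_mul_le_iff₀ hkpos]
  exact_mod_cast hle
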